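/- Let p ≥ 1 and g ≥ 1 be integers and let f ∈ Ω be monotone. Define the number of functional evaluations of the grouped-adaptive inner grid design after g refinement stages as m_GI(g) = Σ_{l=1}^g card( I_l ∩ U(I_{l−1}, f) ), where I_0 = ∅. Then m_GI(g) = Σ_{l=1}^g ( (2^l − 1)^p − (2^l − 2)^p ), and in particular m_GI(g) does not depend on f. -/

import Mathlib

open MeasureTheory Set

/-- The uncertain region `U(D, f)` on the cube `[0,1]^p`;
for `D = ∅` it is all of `[0,1]^p`. -/
def uncertainRegion (p : ℕ) (D : Set (Fin p → ℝ)) (f : (Fin p → ℝ) → ℝ) :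
    Set (Fin p → ℝ) :=
  Icc 0 1 \ ((⋃ x ∈ {y ∈ D | f y = -1}, Icc (0 : Fin p → ℝ) x) ∪
             (⋃ x ∈ {y ∈ D | f y = 1}, Icc x (1 : Fin p → ℝ)))

/-- `Ω`: monotone `{-1,1}`-valued functions on the cube `[0,1]^p`. -/
def OmegaSet (p : ℕ) : Set ((Fin p → ℝ) → ℝ) :=
  {f | MonotoneOn f (Icc 0 1) ∧ ∀ x ∈ Icc (0 : Fin p → ℝ) 1, f x = -1 ∨ f x = 1}

/-- The inner grid `{i/m : i = 1, …, m-1}^p`; `innerDyGrid p (2^l)` is the dyadic inner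
grid `I_l` with `(2^l - 1)^p` points (so `I_0 = ∅` when `p ≥ 1`). -/
def innerDyGrid (p m : ℕ) : Set (Fin p → ℝ) :=
  {x | ∀ k, ∃ i : ℕ, 1 ≤ i ∧ i < m ∧ x k = (i : ℝ) / (m : ℝ)}

/-!
A point `i / 2N` of the fine grid (`1 ≤ i ≤ 2N - 1`) is covered from below by a negative point of
the coarse grid iff the least coarse point above it, `⌈i/2⌉ / N`, is negative, and covered from
above by a positive one iff `⌊i/2⌋ / N = ⌈(i-1)/2⌉ / N` is positive. Extending the sign of `f` by
`+1` beyond the upper faces and by `-1` on the lower faces of the lattice makes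
`S = {i | ⌈i/2⌉ / N is positive}` an upper set of `ℕ^p`, and the uncertain fine points are the
`i` with `i ∈ S`, `i - 1 ∉ S`. Since `S` is an upper set, this count telescopes to
`#(S ∩ [1, n+1]^p) - #(S ∩ [0, n]^p)`, and the two boxes differ only in their faces, where `S` is
known: the count is `(n+1)^p - n^p` with `n = 2N - 2`, whatever `f` is.
-/

open Finset in
theorem card_filter_mem_and_sub_one_not_mem {ι : Type*} [Fintype ι] [DecidableEq ι]
    {S : Set (ι → ℕ)} [DecidablePred (· ∈ S)] (hS : IsUpperSet S) {n : ι → ℕ}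
    (htop : ∀ i, ¬ i ≤ n → i ∈ S) (hbot : ∀ i ≤ n, ¬ 1 ≤ i → i ∉ S) :
    #{i ∈ Finset.Icc 1 (n + 1) | i ∈ S ∧ i - 1 ∉ S} = ∏ k, (n k + 1) - ∏ k, n k := by
  set A := Finset.Icc 1 (n + 1)
  set C := Finset.Icc 1 n
  have hCA : C ⊆ A := Finset.Icc_subset_Icc le_rfl le_self_add
  have hshift : #{i ∈ A | i - 1 ∈ S} = #{j ∈ Icc 0 n | j ∈ S} := by
    refine card_nbij' (· - 1) (· + 1) ?_ ?_ ?_ ?_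
    · intro i hi
      simp only [coe_filter, A, Finset.mem_Icc, Set.mem_ofPred_eq] at hi ⊢
      exact ⟨⟨zero_le, tsub_le_iff_right.mpr hi.1.2⟩, hi.2⟩
    · intro j hj
      simp only [coe_filter, A, Finset.mem_Icc, Set.mem_ofPred_eq, add_tsub_cancel_right] at hj ⊢
      exact ⟨⟨le_add_self, add_le_add_left hj.1.2 1⟩, hj.2⟩
    · intro i hi
      simp only [coe_filter, A, Finset.mem_Icc, Set.mem_ofPred_eq] at hi
      exact tsub_add_cancel_of_le hi.1.1
    · intro j _
      exact add_tsub_cancel_right j 1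
  have hfilterA : filter (· ∈ S) A = filter (· ∈ S) C ∪ (A \ C) := by
    ext i
    simp only [mem_filter, Finset.mem_union, Finset.mem_sdiff, A, C, Finset.mem_Icc]
    constructor
    · rintro ⟨hi, hiS⟩
      by_cases hin : i ≤ n
      · exact Or.inl ⟨⟨hi.1, hin⟩, hiS⟩
      · exact Or.inr ⟨hi, fun hiC => hin hiC.2⟩
    · rintro (⟨⟨h1, hin⟩, hiS⟩ | ⟨hi, hiC⟩)
      · exact ⟨⟨h1, hin.trans le_self_add⟩, hiS⟩
      · exact ⟨hi, htop i fun hin => hiC ⟨hi.1, hin⟩⟩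
  have hfilterB : filter (· ∈ S) (Icc 0 n) = filter (· ∈ S) C := by
    ext i
    simp only [mem_filter, C, Finset.mem_Icc]
    constructor
    · rintro ⟨⟨-, hin⟩, hiS⟩
      exact ⟨⟨not_not.mp fun h1 => hbot i hin h1 hiS, hin⟩, hiS⟩
    · rintro ⟨⟨-, hin⟩, hiS⟩
      exact ⟨⟨zero_le, hin⟩, hiS⟩
  have hdisj : Disjoint (filter (· ∈ S) C) (A \ C) := disjoint_sdiff.mono_left (filter_subset _ _)
  have hmono : filter (fun i => i - 1 ∈ S) A ⊆ filter (· ∈ S) A :=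
    monotone_filter_right A fun i _ h => hS tsub_le_self h
  rw [filter_and_not, card_sdiff_of_subset hmono, hshift, hfilterA, hfilterB,
    card_union_of_disjoint hdisj, card_sdiff_of_subset hCA, Nat.add_sub_cancel_left]
  simp [A, C, Pi.card_Icc]

section Grid

variable {p : ℕ}

noncomputable def gridPoint (p m : ℕ) (j : Fin p → ℕ) : Fin p → ℝ := fun k => (j k : ℝ) / m

theorem gridPoint_nonneg (m : ℕ) (j : Fin p → ℕ) : 0 ≤ gridPoint p m j :=
  fun _ => div_nonneg (Nat.cast_nonneg _) (Nat.cast_nonneg _)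

theorem gridPoint_mem_Icc {m : ℕ} {j : Fin p → ℕ} (hj : ∀ k, j k ≤ m) :
    gridPoint p m j ∈ Icc 0 1 :=
  ⟨gridPoint_nonneg m j, fun k => div_le_one_of_le₀ (Nat.cast_le.mpr (hj k)) m.cast_nonneg⟩

theorem gridPoint_le_gridPoint_iff {m : ℕ} (hm : 0 < m) {i j : Fin p → ℕ} :
    gridPoint p m i ≤ gridPoint p m j ↔ i ≤ j := by
  simp only [Pi.le_def, gridPoint]
  refine forall_congr' fun k => ?_
  rw [div_le_div_iff_of_pos_right (by exact_mod_cast hm), Nat.cast_le]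

theorem gridPoint_monotone (m : ℕ) : Monotone (gridPoint p m) := fun _ _ hij k =>
  div_le_div_of_nonneg_right (Nat.cast_le.mpr (hij k)) m.cast_nonneg

theorem gridPoint_injective {m : ℕ} (hm : 0 < m) : Function.Injective (gridPoint p m) :=
  fun _ _ h => le_antisymm ((gridPoint_le_gridPoint_iff hm).mp h.le)
    ((gridPoint_le_gridPoint_iff hm).mp h.ge)

theorem gridPoint_two_mul (m : ℕ) (j : Fin p → ℕ) :
    gridPoint p (2 * m) (2 * j) = gridPoint p m j := by
  funext k
  simp only [gridPoint, Pi.mul_apply, Pi.ofNat_apply, Nat.cast_mul, Nat.cast_ofNat]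
  exact mul_div_mul_left _ _ two_ne_zero

theorem mem_innerDyGrid_iff {m : ℕ} {x : Fin p → ℝ} :
    x ∈ innerDyGrid p m ↔ ∃ j, 1 ≤ j ∧ (∀ k, j k < m) ∧ gridPoint p m j = x := by
  simp only [innerDyGrid, Set.mem_ofPred_eq, Classical.skolem, Pi.le_def, funext_iff, gridPoint,
    Pi.one_apply, forall_and]
  exact exists_congr fun j => by simp only [eq_comm]

variable {f : (Fin p → ℝ) → ℝ}

def gridPositiveSet (m : ℕ) (f : (Fin p → ℝ) → ℝ) : Set (Fin p → ℕ) :=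
  {j | (∃ k, m ≤ j k) ∨ (1 ≤ j ∧ f (gridPoint p m j) = 1)}

theorem mem_gridPositiveSet_iff_of_lt {m : ℕ} {j : Fin p → ℕ} (hj : ∀ k, j k < m) :
    j ∈ gridPositiveSet m f ↔ 1 ≤ j ∧ f (gridPoint p m j) = 1 := by
  simp only [gridPositiveSet, Set.mem_ofPred_eq, or_iff_right_iff_imp]
  exact fun ⟨k, hk⟩ => absurd (hj k) hk.not_gt

theorem isUpperSet_gridPositiveSet (hf : f ∈ OmegaSet p) (m : ℕ) :
    IsUpperSet (gridPositiveSet m f) := by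
  intro a b hab ha
  by_cases hb : ∃ k, m ≤ b k
  · exact Or.inl hb
  push Not at hb
  obtain ⟨ha1, hfa⟩ := (mem_gridPositiveSet_iff_of_lt fun k => (hab k).trans_lt (hb k)).mp ha
  have hbIcc := gridPoint_mem_Icc fun k => (hb k).le
  have hfab : f (gridPoint p m a) ≤ f (gridPoint p m b) :=
    hf.1 (gridPoint_mem_Icc fun k => ((hab k).trans_lt (hb k)).le) hbIcc (gridPoint_monotone m hab)
  refine Or.inr ⟨ha1.trans hab, (hf.2 _ hbIcc).resolve_left fun h => ?_⟩
  rw [hfa, h] at hfab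
  norm_num at hfab

theorem gridPoint_mem_lowerCover_iff (hf : f ∈ OmegaSet p) {N : ℕ} (hN : 0 < N)
    {i : Fin p → ℕ} (hi : 1 ≤ i) :
    gridPoint p (2 * N) i ∈ ⋃ y ∈ {y ∈ innerDyGrid p N | f y = -1}, Icc 0 y ↔
      (i + 1) / 2 ∉ gridPositiveSet N f := by
  simp only [mem_iUnion, exists_prop, mem_Icc, mem_innerDyGrid_iff]
  constructor
  · rintro ⟨_, ⟨⟨j, -, hjN, rfl⟩, hfj⟩, -, hij⟩ hpos
    rw [← gridPoint_two_mul N j, gridPoint_le_gridPoint_iff (by omega)] at hij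
    have hceil : (i + 1) / 2 ≤ j := fun k => by
      have := hij k
      simp only [Pi.mul_apply, Pi.ofNat_apply] at this
      show (i k + 1) / 2 ≤ j k
      omega
    have := ((mem_gridPositiveSet_iff_of_lt hjN).mp
      (isUpperSet_gridPositiveSet hf N hceil hpos)).2
    rw [hfj] at this
    norm_num at this
  · intro hpos
    have hjN : ∀ k, ((i + 1) / 2) k < N := by
      by_contra h
      push Not at h
      exact hpos (Or.inl h)
    have hj1 : 1 ≤ (i + 1) / 2 := fun k => by
      have : 1 ≤ i k := hi k
      show 1 ≤ (i k + 1) / 2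
      omega
    rw [mem_gridPositiveSet_iff_of_lt hjN, not_and] at hpos
    have hfj := (hf.2 _ (gridPoint_mem_Icc fun k => (hjN k).le)).resolve_right (hpos hj1)
    refine ⟨_, ⟨⟨_, hj1, hjN, rfl⟩, hfj⟩, gridPoint_nonneg _ _, ?_⟩
    rw [← gridPoint_two_mul N, gridPoint_le_gridPoint_iff (by omega)]
    intro k
    show i k ≤ 2 * ((i k + 1) / 2)
    omega

theorem gridPoint_mem_upperCover_iff (hf : f ∈ OmegaSet p) {N : ℕ} (hN : 0 < N)
    {i : Fin p → ℕ} (hi : ∀ k, i k < 2 * N) :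
    gridPoint p (2 * N) i ∈ ⋃ y ∈ {y ∈ innerDyGrid p N | f y = 1}, Icc y 1 ↔
      i / 2 ∈ gridPositiveSet N f := by
  have hjN : ∀ k, (i / 2) k < N := fun k => by
    have := hi k
    show i k / 2 < N
    omega
  simp only [mem_iUnion, exists_prop, mem_Icc, mem_innerDyGrid_iff]
  constructor
  · rintro ⟨_, ⟨⟨j, hj1, hjN, rfl⟩, hfj⟩, hji, -⟩
    rw [← gridPoint_two_mul, gridPoint_le_gridPoint_iff (by omega)] at hji
    have hfloor : j ≤ i / 2 := fun k => by
      have := hji k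
      simp only [Pi.mul_apply, Pi.ofNat_apply] at this
      show j k ≤ i k / 2
      omega
    exact isUpperSet_gridPositiveSet hf N hfloor
      ((mem_gridPositiveSet_iff_of_lt hjN).mpr ⟨hj1, hfj⟩)
  · intro hpos
    obtain ⟨hj1, hfj⟩ := (mem_gridPositiveSet_iff_of_lt hjN).mp hpos
    refine ⟨_, ⟨⟨_, hj1, hjN, rfl⟩, hfj⟩, ?_, (gridPoint_mem_Icc fun k => (hi k).le).2⟩
    rw [← gridPoint_two_mul, gridPoint_le_gridPoint_iff (by omega)]
    intro k
    show 2 * (i k / 2) ≤ i k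
    omega

theorem gridPoint_mem_uncertainRegion_iff (hf : f ∈ OmegaSet p) {N : ℕ} (hN : 0 < N)
    {i : Fin p → ℕ} (hi₁ : 1 ≤ i) (hi₂ : ∀ k, i k < 2 * N) :
    gridPoint p (2 * N) i ∈ uncertainRegion p (innerDyGrid p N) f ↔
      (i + 1) / 2 ∈ gridPositiveSet N f ∧ i / 2 ∉ gridPositiveSet N f := by
  rw [uncertainRegion, mem_sdiff, mem_union, gridPoint_mem_lowerCover_iff hf hN hi₁,
    gridPoint_mem_upperCover_iff hf hN hi₂]
  simp only [gridPoint_mem_Icc fun k => (hi₂ k).le, true_and, not_or, not_not]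

theorem innerDyGrid_two_mul_inter_uncertainRegion (hf : f ∈ OmegaSet p) {N : ℕ} (hN : 0 < N) :
    innerDyGrid p (2 * N) ∩ uncertainRegion p (innerDyGrid p N) f =
      gridPoint p (2 * N) '' {i | (1 ≤ i ∧ ∀ k, i k < 2 * N) ∧
        (i + 1) / 2 ∈ gridPositiveSet N f ∧ i / 2 ∉ gridPositiveSet N f} := by
  ext x
  simp only [mem_inter_iff, mem_innerDyGrid_iff, mem_image, mem_ofPred_eq]
  constructor
  · rintro ⟨⟨i, hi₁, hi₂, rfl⟩, hU⟩
    exact ⟨i, ⟨⟨hi₁, hi₂⟩, (gridPoint_mem_uncertainRegion_iff hf hN hi₁ hi₂).mp hU⟩, rfl⟩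
  · rintro ⟨i, ⟨⟨hi₁, hi₂⟩, hU⟩, rfl⟩
    exact ⟨⟨i, hi₁, hi₂, rfl⟩, (gridPoint_mem_uncertainRegion_iff hf hN hi₁ hi₂).mpr hU⟩

theorem ncard_innerDyGrid_two_mul_inter_uncertainRegion (hf : f ∈ OmegaSet p) {N : ℕ}
    (hN : 0 < N) :
    (innerDyGrid p (2 * N) ∩ uncertainRegion p (innerDyGrid p N) f).ncard
      = (2 * N - 1) ^ p - (2 * N - 2) ^ p := by
  classical
  set S : Set (Fin p → ℕ) := (fun i => (i + 1) / 2) ⁻¹' gridPositiveSet N f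
  set n : Fin p → ℕ := fun _ => 2 * N - 2
  have hS : IsUpperSet S := (isUpperSet_gridPositiveSet hf N).preimage fun a b h k =>
    Nat.div_le_div_right (Nat.add_le_add_right (h k) 1)
  have htop : ∀ i, ¬ i ≤ n → i ∈ S := fun i hi => by
    obtain ⟨k, hk⟩ := not_forall.mp hi
    exact Or.inl ⟨k, show N ≤ (i k + 1) / 2 by simp only [n, not_le] at hk; omega⟩
  have hbot : ∀ i ≤ n, ¬ 1 ≤ i → i ∉ S := fun i hin hi hiS => by
    obtain ⟨k, hk⟩ := not_forall.mp hi
    have hlt : ∀ k, ((i + 1) / 2) k < N := fun k => by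
      have : i k ≤ 2 * N - 2 := hin k
      show (i k + 1) / 2 < N
      omega
    have := ((mem_gridPositiveSet_iff_of_lt hlt).mp hiS).1 k
    simp only [Pi.div_apply, Pi.add_apply, Pi.ofNat_apply] at hk this
    omega
  have hbox : ∀ i, i ∈ Finset.Icc 1 (n + 1) ↔ 1 ≤ i ∧ ∀ k, i k < 2 * N := fun i => by
    simp only [Finset.mem_Icc, Pi.le_def, Pi.add_apply, Pi.one_apply, n]
    exact and_congr_right fun _ => forall_congr' fun k => by omega
  have hfilter : {i | (1 ≤ i ∧ ∀ k, i k < 2 * N) ∧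
      (i + 1) / 2 ∈ gridPositiveSet N f ∧ i / 2 ∉ gridPositiveSet N f} =
      ↑(Finset.filter (fun i => i ∈ S ∧ i - 1 ∉ S) (Finset.Icc 1 (n + 1))) := by
    ext i
    simp only [mem_ofPred_eq, Finset.coe_filter, ← hbox]
    refine and_congr_right fun hi => ?_
    simp only [S, mem_preimage, tsub_add_cancel_of_le ((hbox i).mp hi).1]
  rw [innerDyGrid_two_mul_inter_uncertainRegion hf hN, hfilter,
    ncard_image_of_injective _ (gridPoint_injective (by omega)), ncard_coe_finset,
    card_filter_mem_and_sub_one_not_mem hS htop hbot]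
  simp only [n, Finset.prod_const, Finset.card_univ, Fintype.card_fin]
  rw [show 2 * N - 2 + 1 = 2 * N - 1 by omega]

end Grid

theorem grouped_adaptive_inner_grid_eval_count_general (p g : ℕ)
    (f : (Fin p → ℝ) → ℝ) (hf : f ∈ OmegaSet p) :
    ∑ l ∈ Finset.Icc 1 g,
        (innerDyGrid p (2 ^ l) ∩ uncertainRegion p (innerDyGrid p (2 ^ (l - 1))) f).ncard
      = ∑ l ∈ Finset.Icc 1 g, ((2 ^ l - 1) ^ p - (2 ^ l - 2) ^ p) := by
  refine Finset.sum_congr rfl fun l hl => ?_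
  obtain ⟨l, rfl⟩ := Nat.exists_eq_add_of_le' (Finset.mem_Icc.mp hl).1
  rw [Nat.add_sub_cancel, pow_succ']
  exact ncard_innerDyGrid_two_mul_inter_uncertainRegion hf (Nat.two_pow_pos l)

/-- Theorem 8: the number of evaluations of the grouped-adaptive inner grid design after
`g` stages, `m_GI(g) = Σ_{l=1}^g card(I_l ∩ U(I_{l-1}, f))`, equals
`Σ_{l=1}^g ((2^l - 1)^p - (2^l - 2)^p)` (independently of `f`). -/
theorem grouped_adaptive_inner_grid_eval_count (p g : ℕ) (hp : 1 ≤ p) (hg : 1 ≤ g)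
    (f : (Fin p → ℝ) → ℝ) (hf : f ∈ OmegaSet p) :
    ∑ l ∈ Finset.Icc 1 g,
        (innerDyGrid p (2 ^ l) ∩ uncertainRegion p (innerDyGrid p (2 ^ (l - 1))) f).ncard
      = ∑ l ∈ Finset.Icc 1 g, ((2 ^ l - 1) ^ p - (2 ^ l - 2) ^ p) :=
  grouped_adaptive_inner_grid_eval_count_general p g f hf
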